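/- If n is an odd composite number and a_1, ..., a_k are chosen independently and uniformly at random from {1, ..., n-1}, then the probability that none of them is a Solovay-Strassen witness for the compositeness of n is at most 2^(-k). -/

import Mathlib

/-!
Non-witnesses in `[1, n - 1]` are coprime to `n`, so they inject into the Euler–Jacobi subgroup
`{u ∈ (ZMod n)ˣ | u ^ ((n - 1) / 2) = J(u | n)}`. For odd composite `n` this subgroup is proper,
hence has at most `φ(n) / 2 ≤ (n - 1) / 2` elements. Writing `n = p * m` with `p` the least prime
factor: if `p ∣ m` then `p ∣ φ(n)`, and a unit of order `p` cannot satisfy `u ^ (n - 1) = 1`,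
which every member of the subgroup does; otherwise the unit that is a quadratic nonresidue mod `p`
and `1` mod `m` has `J(u | n) = -1` but `u ^ ((n - 1) / 2) ≡ 1 [MOD m]`, and `m > 2`.
A `k`-tuple of non-witnesses is then one of at most `((n - 1) / 2) ^ k` tuples.
-/

/-- The Solovay-Strassen witness predicate. -/
def SSWitness (a n : ℕ) : Prop :=
  1 < Nat.gcd a n ∨ ¬ ((a : ℤ) ^ ((n - 1) / 2) ≡ jacobiSym (a : ℤ) n [ZMOD (n : ℤ)])

open Finset

def jacobiSymHom (n : ℕ) : ZMod n →* ℤ where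
  toFun x := jacobiSym (x.val : ℤ) n
  map_one' := by
    rw [ZMod.val_one_eq_one_mod]
    push_cast
    exact (jacobiSym.mod_left 1 n).symm.trans (jacobiSym.one_left n)
  map_mul' x y := by
    rw [← jacobiSym.mul_left, jacobiSym.mod_left, ZMod.val_mul, jacobiSym.mod_left (_ * _)]
    push_cast
    rw [Int.emod_emod_of_dvd _ dvd_rfl]

lemma jacobiSymHom_apply (n : ℕ) (x : ZMod n) : jacobiSymHom n x = jacobiSym (x.val : ℤ) n := rfl

lemma jacobiSymHom_natCast (n a : ℕ) : jacobiSymHom n a = jacobiSym a n := by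
  rw [jacobiSymHom_apply, ZMod.val_natCast, jacobiSym.mod_left (a : ℤ)]
  push_cast
  rfl

lemma jacobiSymHom_sq_of_isUnit {n : ℕ} {x : ZMod n} (hx : IsUnit x) : jacobiSymHom n x ^ 2 = 1 :=
  Int.isUnit_sq (hx.map _)

def eulerJacobiSubgroup (n : ℕ) : Subgroup (ZMod n)ˣ :=
  MonoidHom.eqLocus ((powMonoidHom ((n - 1) / 2)).comp (Units.coeHom (ZMod n)))
    (((Int.castRingHom (ZMod n)) : ℤ →* ZMod n).comp ((jacobiSymHom n).comp (Units.coeHom _)))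

lemma mem_eulerJacobiSubgroup {n : ℕ} {u : (ZMod n)ˣ} :
    u ∈ eulerJacobiSubgroup n ↔ (u : ZMod n) ^ ((n - 1) / 2) = jacobiSymHom n u :=
  Iff.rfl

lemma pow_pred_eq_one_of_mem_eulerJacobiSubgroup {n : ℕ} (hn : Odd n) {u : (ZMod n)ˣ}
    (hu : u ∈ eulerJacobiSubgroup n) : u ^ (n - 1) = 1 := by
  have he : n - 1 = (n - 1) / 2 * 2 := by obtain ⟨k, rfl⟩ := hn; omega
  ext
  rw [Units.val_pow_eq_pow_val, he, pow_mul, mem_eulerJacobiSubgroup.1 hu, ← Int.cast_pow,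
    jacobiSymHom_sq_of_isUnit u.isUnit, Int.cast_one, Units.val_one]

lemma exists_units_pow_pred_ne_one {n p : ℕ} [NeZero n] (hp : p.Prime) (hpn : p * p ∣ n) :
    ∃ u : (ZMod n)ˣ, u ^ (n - 1) ≠ 1 := by
  have := Fact.mk hp
  have hφ : p ∣ Fintype.card (ZMod n)ˣ := by
    obtain ⟨m, hm⟩ := hpn
    rw [ZMod.card_units_eq_totient, hm, mul_assoc,
      Nat.totient_mul_of_prime_of_dvd hp (dvd_mul_right p m)]
    exact dvd_mul_right _ _
  obtain ⟨u, hu⟩ := exists_prime_orderOf_dvd_card p hφ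
  refine ⟨u, fun h => hp.one_lt.ne' (Nat.dvd_one.1 ?_)⟩
  have hpn' : p ∣ n := (dvd_mul_right p p).trans hpn
  have hpn1 : p ∣ n - 1 := hu ▸ orderOf_dvd_of_pow_eq_one h
  simpa [Nat.sub_sub_self (NeZero.one_le : 1 ≤ n)] using Nat.dvd_sub hpn' hpn1

lemma ZMod.chineseRemainder_apply {m n : ℕ} [NeZero m] [NeZero n] (h : m.Coprime n)
    (x : ZMod (m * n)) :
    ZMod.chineseRemainder h x = ((x.val : ZMod m), (x.val : ZMod n)) := by
  change ZMod.cast x = _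
  ext
  · rw [Prod.fst_zmod_cast, ZMod.cast_eq_val]
  · rw [Prod.snd_zmod_cast, ZMod.cast_eq_val]

lemma exists_notMem_eulerJacobiSubgroup_of_coprime {p m : ℕ} [Fact p.Prime] (hp : p ≠ 2)
    (hm : 2 < m) (hpm : p.Coprime m) : ∃ u, u ∉ eulerJacobiSubgroup (p * m) := by
  have : Fact (2 < m) := ⟨hm⟩
  have : NeZero m := ⟨by omega⟩
  obtain ⟨b, hb⟩ := FiniteField.exists_nonsquare (F := ZMod p) (by rwa [ZMod.ringChar_zmod_n])
  have hb0 : b ≠ 0 := by rintro rfl; exact hb IsSquare.zero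
  have hb1 : IsUnit ((b, 1) : ZMod p × ZMod m) := Prod.isUnit_iff.2 ⟨hb0.isUnit, isUnit_one⟩
  obtain ⟨u, hu⟩ : ∃ u : (ZMod (p * m))ˣ, ZMod.chineseRemainder hpm u = (b, 1) :=
    ⟨(hb1.map (ZMod.chineseRemainder hpm).symm).unit, by simp⟩
  rw [ZMod.chineseRemainder_apply, Prod.mk.injEq] at hu
  obtain ⟨hup, hum⟩ := hu
  have hJp : jacobiSym ((u : ZMod (p * m)).val : ℤ) p = -1 := by
    rw [ZMod.nonsquare_iff_jacobiSym_eq_neg_one, Int.cast_natCast, hup]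
    exact hb
  have hJm : jacobiSym ((u : ZMod (p * m)).val : ℤ) m = 1 := by
    rw [← jacobiSymHom_natCast, hum, map_one]
  refine ⟨u, fun h => ZMod.neg_one_ne_one (n := m) ?_⟩
  rw [mem_eulerJacobiSubgroup, jacobiSymHom_apply, jacobiSym.mul_right, hJp, hJm] at h
  have := congrArg (ZMod.castHom (dvd_mul_left m p) (ZMod m)) h
  rw [map_pow, ZMod.castHom_apply, ZMod.cast_eq_val, hum] at this
  simpa using this.symm

lemma eulerJacobiSubgroup_ne_top {n : ℕ} (hodd : Odd n) (h1 : 1 < n) (hcomp : ¬ n.Prime) :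
    eulerJacobiSubgroup n ≠ ⊤ := by
  have hp : n.minFac.Prime := Nat.minFac_prime (by omega)
  obtain ⟨m, hm⟩ := n.minFac_dvd
  generalize n.minFac = p at hp hm
  subst hm
  have : NeZero (p * m) := ⟨by omega⟩
  refine fun htop => ?_
  by_cases hpm : p ∣ m
  · obtain ⟨u, hu⟩ := exists_units_pow_pred_ne_one hp (mul_dvd_mul_left p hpm)
    exact hu (pow_pred_eq_one_of_mem_eulerJacobiSubgroup hodd (htop ▸ Subgroup.mem_top u))
  · have := Fact.mk hp
    have hp2 : p ≠ 2 := by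
      rintro rfl
      exact Nat.not_even_iff_odd.2 hodd (even_two_mul m)
    have hm0 : m ≠ 0 := by rintro rfl; omega
    have hm1 : m ≠ 1 := by rintro rfl; exact hcomp (by simpa using hp)
    have hm2 : m ≠ 2 := by rintro rfl; exact Nat.not_even_iff_odd.2 hodd (even_two.mul_left p)
    obtain ⟨u, hu⟩ := exists_notMem_eulerJacobiSubgroup_of_coprime hp2 (by omega)
      ((Nat.Prime.coprime_iff_not_dvd hp).2 hpm)
    exact hu (htop ▸ Subgroup.mem_top u)

lemma Subgroup.two_mul_card_le_of_ne_top {G : Type*} [Group G] [Finite G] {H : Subgroup G}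
    (hH : H ≠ ⊤) : 2 * Nat.card H ≤ Nat.card G := by
  rw [← H.card_mul_index, mul_comm]
  exact Nat.mul_le_mul_left _ (H.one_lt_index_of_ne_top hH)

instance (a n : ℕ) : Decidable (SSWitness a n) := by
  unfold SSWitness
  infer_instance

def eulerLiars (n : ℕ) : Finset ℕ := {a ∈ Icc 1 (n - 1) | ¬ SSWitness a n}

lemma mem_eulerLiars {n a : ℕ} : a ∈ eulerLiars n ↔ (1 ≤ a ∧ a ≤ n - 1) ∧ ¬ SSWitness a n := by
  rw [eulerLiars, mem_filter, mem_Icc]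

lemma card_eulerLiars_le_card_eulerJacobiSubgroup (n : ℕ) [NeZero n] :
    #(eulerLiars n) ≤ Nat.card (eulerJacobiSubgroup n) := by
  classical
  calc #(eulerLiars n)
      ≤ #((univ.filter (· ∈ eulerJacobiSubgroup n)).image fun u : (ZMod n)ˣ => (u : ZMod n).val) :=
        card_le_card ?_
    _ ≤ #(univ.filter (· ∈ eulerJacobiSubgroup n)) := card_image_le
    _ = Nat.card (eulerJacobiSubgroup n) := by
        rw [Nat.card_eq_fintype_card, Fintype.card_subtype]
  intro a ha
  simp only [mem_eulerLiars, SSWitness, not_or, not_lt, not_not] at ha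
  obtain ⟨⟨ha1, han⟩, hgcd, hcong⟩ := ha
  have han : a < n := by have := NeZero.one_le (n := n); omega
  have hcop : a.Coprime n := by
    have : 0 < a.gcd n := Nat.gcd_pos_of_pos_left _ ha1
    unfold Nat.Coprime; omega
  refine mem_image.2 ⟨ZMod.unitOfCoprime a hcop, ?_, ?_⟩
  · rw [mem_filter, mem_eulerJacobiSubgroup, ZMod.coe_unitOfCoprime, jacobiSymHom_natCast]
    refine ⟨mem_univ _, ?_⟩
    exact_mod_cast (ZMod.intCast_eq_intCast_iff _ _ _).2 hcong
  · rw [ZMod.coe_unitOfCoprime, ZMod.val_natCast_of_lt han]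

lemma two_mul_card_eulerLiars_le {n : ℕ} (hodd : Odd n) (h1 : 1 < n) (hcomp : ¬ n.Prime) :
    2 * #(eulerLiars n) ≤ n - 1 := by
  have : NeZero n := ⟨by omega⟩
  calc 2 * #(eulerLiars n) ≤ 2 * Nat.card (eulerJacobiSubgroup n) :=
        Nat.mul_le_mul_left 2 (card_eulerLiars_le_card_eulerJacobiSubgroup n)
    _ ≤ Nat.card (ZMod n)ˣ :=
        Subgroup.two_mul_card_le_of_ne_top (eulerJacobiSubgroup_ne_top hodd h1 hcomp)
    _ = n.totient := by rw [Nat.card_eq_fintype_card, ZMod.card_units_eq_totient]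
    _ ≤ n - 1 := Nat.le_sub_one_of_lt (Nat.totient_lt n h1)

/-- If `n` is odd and composite, the probability that `k` independent uniform choices from
`{1, ..., n-1}` are all non-witnesses is at most `2⁻ᵏ`: the number of such `k`-tuples,
multiplied by `2^k`, is at most the total number `(n-1)^k` of `k`-tuples. -/
theorem stmt10 (n : ℕ) (hodd : Odd n) (h1 : 1 < n) (hcomp : ¬ n.Prime) (k : ℕ) :
    2 ^ k * Set.ncard {f : Fin k → ℕ |
        (∀ i, 1 ≤ f i ∧ f i ≤ n - 1) ∧ ∀ i, ¬ SSWitness (f i) n} ≤ (n - 1) ^ k := by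
  have hset : {f : Fin k → ℕ | (∀ i, 1 ≤ f i ∧ f i ≤ n - 1) ∧ ∀ i, ¬ SSWitness (f i) n}
      = ↑(Fintype.piFinset fun _ : Fin k => eulerLiars n) := by
    ext f
    simp only [Set.mem_ofPred_eq, mem_coe, Fintype.mem_piFinset, mem_eulerLiars, forall_and]
  rw [hset, Set.ncard_coe_finset, Fintype.card_piFinset_const, ← mul_pow]
  exact Nat.pow_le_pow_left (two_mul_card_eulerLiars_le hodd h1 hcomp) k
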